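/- Let S be a substring-free set of strings over the DNA alphabet and CYC(G_S) an optimal cycle cover of the distance graph G_S. For each cycle C = s'_{i1},…,s'_{ir},s'_{i1} of CYC(G_S), fix an index j and let y_C = ⟨s'_{ij},…,s'_{ir},s'_{i1},…,s'_{ij}⟩, and let x_C be any substring of y_C. Let A = {x_C : C ∈ CYC(G_S)}. Then OPT(A) ≤ OPT(S) + w(CYC(G_S)). -/

import Mathlib

/-- The DNA alphabet. -/
inductive DNA : Type
  | A | T | G | C
  deriving DecidableEq, Repr

/-- Complement of a DNA base: a↔t, g↔c. -/
def DNA.compl : DNA → DNA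
  | .A => .T
  | .T => .A
  | .G => .C
  | .C => .G

/-- Strings over the DNA alphabet. -/
abbrev Str : Type := List DNA

/-- Reverse complement of a string. -/
def rc (s : Str) : Str := (s.map DNA.compl).reverse

/-- An approximate solution for the SCS-RC instance `S`: a string containing,
for each `s ∈ S`, either `s` or its reverse complement as a substring. -/
def ApproxSol (S : Finset Str) (u : Str) : Prop :=
  ∀ s ∈ S, s <:+: u ∨ rc s <:+: u

/-- `OPT S` is the minimum length of an approximate solution for the SCS-RC instance `S`. -/
noncomputable def OPT (S : Finset Str) : ℕ :=
  sInf {n | ∃ u : Str, ApproxSol S u ∧ u.length = n}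

/-- `S` is substring-free: no string of `S ∪ S̄^R` is a substring of another. -/
def SubstrFree (S : Finset Str) : Prop :=
  ∀ x, (x ∈ S ∨ rc x ∈ S) → ∀ y, (y ∈ S ∨ rc y ∈ S) → x ≠ y → ¬ x <:+: y

/-- `ov x y`: the length of the longest string `v` such that `x = u ++ v` and
`y = v ++ w` for nonempty `u`, `w`. -/
noncomputable def ov (x y : Str) : ℕ :=
  sSup {k | ∃ v : Str, v.length = k ∧ (∃ u : Str, u ≠ [] ∧ x = u ++ v) ∧
        (∃ w : Str, w ≠ [] ∧ y = v ++ w)}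

/-- `prefStr x y = pref(x, y)`: the prefix of `x` with respect to `y`. -/
noncomputable def prefStr (x y : Str) : Str := x.take (x.length - ov x y)

/-- `distStr x y = dist(x, y) = |x| - ov(x, y)`. -/
noncomputable def distStr (x y : Str) : ℕ := x.length - ov x y

/-- The merge `⟨x, y⟩ = pref(x, y) ++ y`. -/
noncomputable def mergeStr (x y : Str) : Str := prefStr x y ++ y

/-- `superstr [x1, …, xr] = ⟨x1, …, xr⟩ = pref(x1,x2) ⋯ pref(x_{r-1},x_r) ++ x_r`. -/
noncomputable def superstr : List Str → Str
  | [] => []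
  | [x] => x
  | x :: y :: rest => prefStr x y ++ superstr (y :: rest)

/-- `‖S‖`: the total length of the strings of the finite set `S`. -/
def normS (S : Finset Str) : ℕ := ∑ s ∈ S, s.length

/-- Pairs `(x, y)` of strings from the collection `S` or their reverse complements,
with `x = y`, or with `x ≠ y` and `rc x ≠ y`, as considered by MGREEDY-RC. -/
def ValidPair (S : Finset Str) (x y : Str) : Prop :=
  (x ∈ S ∨ rc x ∈ S) ∧ (y ∈ S ∨ rc y ∈ S) ∧ (x = y ∨ (x ≠ y ∧ rc x ≠ y))

/-- `MGreedyExec S T`: some execution of MGREEDY-RC starting from the collection `S`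
(under some tie-breaking among pairs of maximum overlap) produces the set `T`. -/
inductive MGreedyExec : Finset Str → Finset Str → Prop
  | done : MGreedyExec ∅ ∅
  | close (S T : Finset Str) (x : Str)
      (hx : x ∈ S ∨ rc x ∈ S)
      (hmax : ∀ a b, ValidPair S a b → ov a b ≤ ov x x)
      (h : MGreedyExec (S \ {x, rc x}) T) :
      MGreedyExec S (insert x T)
  | merge (S T : Finset Str) (x y : Str)
      (hx : x ∈ S ∨ rc x ∈ S) (hy : y ∈ S ∨ rc y ∈ S)
      (hne : x ≠ y) (hrc : rc x ≠ y)
      (hmax : ∀ a b, ValidPair S a b → ov a b ≤ ov x y)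
      (h : MGreedyExec (insert (mergeStr x y) (S \ {x, rc x, y, rc y})) T) :
      MGreedyExec S T

/-- `GreedyExec S u`: some execution of GREEDY-RC starting from the collection `S`
(under some tie-breaking among pairs of maximum overlap) outputs the string `u`. -/
inductive GreedyExec : Finset Str → Str → Prop
  | single (x : Str) : GreedyExec {x} x
  | merge (S : Finset Str) (u x y : Str)
      (hx : x ∈ S ∨ rc x ∈ S) (hy : y ∈ S ∨ rc y ∈ S)
      (hne : x ≠ y) (hrc : rc x ≠ y)
      (hmax : ∀ a b, (a ∈ S ∨ rc a ∈ S) → (b ∈ S ∨ rc b ∈ S) → a ≠ b → rc a ≠ b →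
        ov a b ≤ ov x y)
      (hcard : 1 < S.card)
      (h : GreedyExec (insert (mergeStr x y) (S \ {x, rc x, y, rc y})) u) :
      GreedyExec S u

/-- Reverse complement of a path: the path of the reverse complements, reversed. -/
def rcPath (p : List Str) : List Str := (p.map rc).reverse

/-- Valid pairs for the path-level description of MGREEDY-RC, where each collection
element is the path of original strings composing it, its string value being `superstr`. -/
def ValidPairP (P : Finset (List Str)) (p q : List Str) : Prop :=
  (p ∈ P ∨ rcPath p ∈ P) ∧ (q ∈ P ∨ rcPath q ∈ P) ∧
  (superstr p = superstr q ∨ (superstr p ≠ superstr q ∧ rc (superstr p) ≠ superstr q))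

/-- `MGreedyCyc P C`: the path-level description of an execution of MGREEDY-RC.
Starting from the collection of paths `P`, merging the paths `p` and `q` (adding the
edge from the last vertex of `p` to the first of `q`) when the corresponding strings
are merged, and closing the path `p` into the cycle `p` (with the edge from its last
vertex to its first) when the corresponding string is moved to `T`, some execution
produces the set of closed cycles `C`. -/
inductive MGreedyCyc : Finset (List Str) → Finset (List Str) → Prop
  | done : MGreedyCyc ∅ ∅
  | close (P C : Finset (List Str)) (p : List Str)
      (hp : p ∈ P ∨ rcPath p ∈ P)
      (hmax : ∀ q₁ q₂, ValidPairP P q₁ q₂ →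
        ov (superstr q₁) (superstr q₂) ≤ ov (superstr p) (superstr p))
      (h : MGreedyCyc (P \ {p, rcPath p}) C) :
      MGreedyCyc P (insert p C)
  | merge (P C : Finset (List Str)) (p q : List Str)
      (hp : p ∈ P ∨ rcPath p ∈ P) (hq : q ∈ P ∨ rcPath q ∈ P)
      (hne : superstr p ≠ superstr q) (hrc : rc (superstr p) ≠ superstr q)
      (hmax : ∀ q₁ q₂, ValidPairP P q₁ q₂ →
        ov (superstr q₁) (superstr q₂) ≤ ov (superstr p) (superstr q))
      (h : MGreedyCyc (insert (p ++ q) (P \ {p, rcPath p, q, rcPath q})) C) :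
      MGreedyCyc P C

/-- The weight of the cycle `x1, …, xr, x1` given by the list `[x1, …, xr]`:
`Σ_{i=1}^{r} dist(x_i, x_{i+1})` with indices modulo `r`. -/
noncomputable def cycleWeight (c : List Str) : ℕ :=
  ((c.zip (c.rotate 1)).map fun p => distStr p.1 p.2).sum

/-- `C` is a cycle cover of the distance graph `G_S`: a set of vertex-disjoint cycles
on vertices of `S ∪ S̄^R` such that for each `s ∈ S` exactly one of `s` and `rc s`
is contained in the cycles. -/
def IsCycleCover (S : Finset Str) (C : Finset (List Str)) : Prop :=
  (∀ c ∈ C, c ≠ []) ∧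
  (∀ c ∈ C, c.Nodup) ∧
  (∀ c ∈ C, ∀ d ∈ C, c ≠ d → ∀ x ∈ c, x ∉ d) ∧
  (∀ c ∈ C, ∀ x ∈ c, x ∈ S ∨ rc x ∈ S) ∧
  (∀ s ∈ S, Xor' (∃ c ∈ C, s ∈ c) (∃ c ∈ C, rc s ∈ c))

/-- The total weight of a cycle cover. -/
noncomputable def coverWeight (C : Finset (List Str)) : ℕ := ∑ c ∈ C, cycleWeight c

/-- `minCoverWeight S = w(CYC(G_S))`: the minimum total weight of a cycle cover of `G_S`. -/
noncomputable def minCoverWeight (S : Finset Str) : ℕ :=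
  sInf {n | ∃ C : Finset (List Str), IsCycleCover S C ∧ coverWeight C = n}

/-- `x` is a factor of `s`: `s = x^i ++ y` for some `i ≥ 1` and some prefix `y` of `x`. -/
def IsFactor (x s : Str) : Prop :=
  x ≠ [] ∧ ∃ i : ℕ, 1 ≤ i ∧ ∃ y : Str, y <+: x ∧ s = (List.replicate i x).flatten ++ y

/-- `period s`: the length of the shortest factor of `s`. -/
noncomputable def periodStr (s : Str) : ℕ :=
  sInf {k | ∃ x : Str, IsFactor x s ∧ x.length = k}

open Classical in
/-- `factorStr s`: a shortest factor of `s`. -/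
noncomputable def factorStr (s : Str) : Str :=
  if h : ∃ x : Str, IsFactor x s ∧ x.length = periodStr s then h.choose else []

/-- Two strings are equivalent if the factor of one is a cyclic shift of the factor
of the other. -/
def EquivStr (x y : Str) : Prop :=
  ∃ e f : Str, factorStr x = e ++ f ∧ factorStr y = f ++ e

/-!
Take a shortest approximate solution `u` of `S`. For a cycle `p`, the first vertex `t` of
the chosen rotation is a vertex of `G_S`, so `t` or `rc t` occurs in `u`; call it the anchor `T`,
and let `Y` be `y_p` or `rc y_p` accordingly. Then `Y` begins and ends with `T` and
`|Y| = w(p) + |T|`. Anchors of different cycles are different vertices, so by substring-freeness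
none is a substring of another, and their occurrences in `u` are ordered by start and by end
alike. Gluing the `Y`'s in this order, consecutive ones overlapping as their anchors overlap in
`u`, yields a string containing each `x_p` or its reverse complement, of length at most
`|u| + Σ (|Y| - |T|) = OPT(S) + w(CYC(G_S))`.
-/

section Occurrences

open List

variable {α : Type*}

theorem List.suffix_append_drop_of_suffix_of_prefix {z a b : List α} (ha : z <:+ a)
    (hb : z <+: b) : b <:+ a ++ b.drop z.length := by
  obtain ⟨c, rfl⟩ := ha
  obtain ⟨d, rfl⟩ := hb
  exact ⟨c, by simp⟩

def OccursAt (u t : List α) (s : ℕ) : Prop := t <+: u.drop s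

namespace OccursAt

variable {u t t' : List α} {s s' : ℕ}

theorem exists_of_infix (h : t <:+: u) : ∃ s, OccursAt u t s ∧ s + t.length ≤ u.length := by
  obtain ⟨a, b, rfl⟩ := h
  exact ⟨a.length, by simp [OccursAt], by simp⟩

theorem take (h : OccursAt u t s) (k : ℕ) : OccursAt u (t.take k) s :=
  (take_prefix k t).trans h

theorem drop (h : OccursAt u t s) (k : ℕ) : OccursAt u (t.drop k) (s + k) := by
  rw [OccursAt, ← List.drop_drop]; exact List.IsPrefix.drop h k

theorem eq_of_length_eq (h : OccursAt u t s) (h' : OccursAt u t' s)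
    (hlen : t.length = t'.length) : t = t' :=
  (prefix_of_prefix_length_le h h' hlen.le).eq_of_length hlen

theorem infix_of_nested (h : OccursAt u t s) (h' : OccursAt u t' s') (hs : s ≤ s')
    (he : s' + t'.length ≤ s + t.length) : t' <:+: t := by
  have hd : OccursAt u (t.drop (s' - s)) s' := by
    simpa [Nat.add_sub_cancel' hs] using h.drop (s' - s)
  exact (prefix_of_prefix_length_le h' hd (by simp; omega)).isInfix.trans
    (drop_suffix _ _).isInfix

theorem drop_eq_take (h : OccursAt u t s) (h' : OccursAt u t' s') (hs : s ≤ s')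
    (he : s + t.length ≤ s' + t'.length) :
    t.drop (s' - s) = t'.take (s + t.length - s') := by
  have hd : OccursAt u (t.drop (s' - s)) s' := by
    simpa [Nat.add_sub_cancel' hs] using h.drop (s' - s)
  exact hd.eq_of_length_eq (h'.take _) (by simp; omega)

end OccursAt

variable {ι : Type*} {u : List α} {Y T : ι → List α} {s : ι → ℕ}

theorem exists_superstring_of_sorted_occurrences (hpre : ∀ i, T i <+: Y i)
    (hsuf : ∀ i, T i <:+ Y i) (hocc : ∀ i, OccursAt u (T i) (s i))
    (hend : ∀ i, s i + (T i).length ≤ u.length) (i : ι) (l : List ι)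
    (hl : (i :: l).Pairwise fun i j => s i ≤ s j ∧ s i + (T i).length ≤ s j + (T j).length) :
    ∃ v, Y i <+: v ∧ (∀ j ∈ i :: l, Y j <:+: v) ∧
      v.length + s i + ((i :: l).map fun j => (T j).length).sum
        ≤ u.length + ((i :: l).map fun j => (Y j).length).sum := by
  induction l generalizing i with
  | nil =>
    refine ⟨Y i, prefix_rfl, by simp, ?_⟩
    have := hend i
    simp; omega
  | cons j l ih =>
    obtain ⟨hij, hl⟩ := pairwise_cons.mp hl
    obtain ⟨hs, he⟩ := hij j mem_cons_self
    obtain ⟨v, hjv, hv, hlen⟩ := ih j hl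
    obtain ⟨o, ho⟩ : ∃ o, o = s i + (T i).length - s j := ⟨_, rfl⟩
    -- the occurrences of `T i` and `T j` in `u` share `o` letters, which end `Y i` and begin `v`
    have hov : (T i).drop (s j - s i) <+: v := by
      rw [(hocc i).drop_eq_take (hocc j) hs he]
      exact (take_prefix _ _).trans ((hpre j).trans hjv)
    have hglue : v <:+ Y i ++ v.drop o := by
      have := suffix_append_drop_of_suffix_of_prefix ((drop_suffix _ _).trans (hsuf i)) hov
      rwa [length_drop, show (T i).length - (s j - s i) = o by omega] at this
    refine ⟨Y i ++ v.drop o, prefix_append _ _, ?_, ?_⟩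
    · intro k hk
      rcases mem_cons.mp hk with rfl | hk
      · exact (prefix_append _ _).isInfix
      · exact (hv k hk).trans hglue.isInfix
    · have ho_le : o ≤ v.length :=
        calc o ≤ (T j).length := by omega
          _ ≤ v.length := ((hpre j).trans hjv).length_le
      simp only [map_cons, sum_cons, length_append, length_drop] at hlen ⊢
      omega

/-- Sorting the occurrences by their start, substring-freeness makes the ends sorted too. -/
theorem exists_superstring_of_borders [Fintype ι] (hpre : ∀ i, T i <+: Y i)
    (hsuf : ∀ i, T i <:+ Y i) (hinf : ∀ i, T i <:+: u)
    (hT : Pairwise fun i j => ¬ T i <:+: T j) :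
    ∃ v, (∀ i, Y i <:+: v) ∧ v.length + ∑ i, (T i).length ≤ u.length + ∑ i, (Y i).length := by
  choose s hocc hend using fun i => OccursAt.exists_of_infix (hinf i)
  set L := (Finset.univ : Finset ι).toList.mergeSort fun i j => decide (s i ≤ s j)
  have hperm : L.Perm Finset.univ.toList := mergeSort_perm _ _
  have hsum : ∀ f : ι → ℕ, (L.map f).sum = ∑ i, f i := fun f => by
    rw [(hperm.map f).sum_eq, Finset.sum_map_toList]
  have hsorted : L.Pairwise fun i j => s i ≤ s j ∧ s i + (T i).length ≤ s j + (T j).length := by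
    have hle : L.Pairwise fun i j => s i ≤ s j := by
      simpa using pairwise_mergeSort (le := fun i j => decide (s i ≤ s j))
        (fun a b c hab hbc => by simp only [decide_eq_true_eq] at *; omega)
        (fun a b => by simpa using le_total (s a) (s b)) Finset.univ.toList
    refine (hle.and (hperm.nodup_iff.mpr (Finset.nodup_toList _))).imp ?_
    rintro i j ⟨hs, hij⟩
    refine ⟨hs, not_lt.mp fun he => hT hij.symm ?_⟩
    exact (hocc i).infix_of_nested (hocc j) hs he.le
  have hmem : ∀ i, i ∈ L := fun i =>
    hperm.mem_iff.mpr (Finset.mem_toList.mpr (Finset.mem_univ i))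
  rcases hL : L with _ | ⟨i, l⟩
  · rw [hL] at hmem hsum
    refine ⟨[], fun i => absurd (hmem i) not_mem_nil, ?_⟩
    simp [← hsum]
  · rw [hL] at hsorted hsum hmem
    obtain ⟨v, -, hv, hlen⟩ :=
      exists_superstring_of_sorted_occurrences hpre hsuf hocc hend i l hsorted
    exact ⟨v, fun j => hv j (hmem j), by rw [← hsum, ← hsum]; omega⟩

end Occurrences

theorem DNA.compl_compl (b : DNA) : b.compl.compl = b := by cases b <;> rfl

@[simp] theorem rc_rc (s : Str) : rc (rc s) = s := by
  simp [rc, Function.comp_def, DNA.compl_compl]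

@[simp] theorem length_rc (s : Str) : (rc s).length = s.length := by simp [rc]

theorem rc_append (s t : Str) : rc (s ++ t) = rc t ++ rc s := by simp [rc]

theorem rc_injective : Function.Injective rc := fun s t h => by rw [← rc_rc s, h, rc_rc]

theorem List.IsInfix.rc {a b : Str} (h : a <:+: b) : rc a <:+: rc b := by
  obtain ⟨s, t, rfl⟩ := h
  exact ⟨_root_.rc t, _root_.rc s, by rw [rc_append, rc_append, List.append_assoc]⟩

theorem List.IsPrefix.rc {a b : Str} (h : a <+: b) : rc a <:+ rc b := by
  obtain ⟨t, rfl⟩ := h; exact ⟨_root_.rc t, (rc_append _ _).symm⟩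

theorem List.IsSuffix.rc {a b : Str} (h : a <:+ b) : rc a <+: rc b := by
  obtain ⟨t, rfl⟩ := h; exact ⟨_root_.rc t, (rc_append _ _).symm⟩

theorem exists_eq_append_of_ov_ne_zero {x y : Str} (h : ov x y ≠ 0) :
    ∃ u v w, x = u ++ v ∧ y = v ++ w ∧ v.length = ov x y := by
  set K : Set ℕ := {k | ∃ v : Str, v.length = k ∧
    (∃ u : Str, u ≠ [] ∧ x = u ++ v) ∧ (∃ w : Str, w ≠ [] ∧ y = v ++ w)}
  have hov : ov x y = sSup K := rfl
  have hbdd : BddAbove K := ⟨x.length, by rintro k ⟨v, rfl, ⟨u, -, rfl⟩, -⟩; simp⟩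
  have hne : K.Nonempty := Set.nonempty_iff_ne_empty.mpr fun he => h (by simp [hov, he])
  obtain ⟨v, hv, ⟨u, -, hx⟩, ⟨w, -, hy⟩⟩ := Nat.sSup_mem hne hbdd
  exact ⟨u, v, w, hx, hy, hv ▸ hov.symm⟩

theorem length_prefStr (x y : Str) : (prefStr x y).length = distStr x y := by
  simp [prefStr, distStr]

theorem prefix_prefStr_append (x y : Str) : x <+: prefStr x y ++ y := by
  by_cases h : ov x y = 0
  · simp [prefStr, h]
  · obtain ⟨u, v, w, rfl, rfl, hv⟩ := exists_eq_append_of_ov_ne_zero h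
    rw [prefStr, ← hv, List.length_append, Nat.add_sub_cancel, List.take_left,
      ← List.append_assoc]
    exact List.prefix_append _ _

theorem prefix_superstr_cons (x : Str) (l : List Str) : x <+: superstr (x :: l) := by
  induction l generalizing x with
  | nil => exact List.prefix_rfl
  | cons y l ih =>
    obtain ⟨w, hw⟩ := ih y
    rw [superstr, ← hw, ← List.append_assoc]
    exact (prefix_prefStr_append x y).trans (List.prefix_append _ _)

theorem suffix_superstr_concat (x a : Str) (l : List Str) :
    a <:+ superstr (x :: (l ++ [a])) := by
  induction l generalizing x with
  | nil => exact List.suffix_append _ _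
  | cons y l ih => exact (ih y).trans (List.suffix_append _ _)

theorem length_superstr_concat (x a : Str) (l : List Str) :
    (superstr (x :: (l ++ [a]))).length =
      (List.zipWith distStr (x :: l) (l ++ [a])).sum + a.length := by
  induction l generalizing x with
  | nil => simp [superstr, length_prefStr]
  | cons y l ih =>
    rw [List.cons_append, superstr, List.length_append, length_prefStr, ih]
    simp only [List.zipWith_cons_cons, List.sum_cons]
    omega

theorem cycleWeight_eq_sum_zipWith (c : List Str) :
    cycleWeight c = (List.zipWith distStr c (c.rotate 1)).sum := by
  rw [cycleWeight, List.map_zip_eq_zipWith]; rfl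

theorem cycleWeight_rotate (c : List Str) (k : ℕ) : cycleWeight (c.rotate k) = cycleWeight c := by
  rw [cycleWeight_eq_sum_zipWith, cycleWeight_eq_sum_zipWith, List.rotate_rotate, add_comm,
    ← List.rotate_rotate, ← List.zipWith_rotate_distrib _ _ _ _ (by simp)]
  exact (List.rotate_perm _ _).sum_eq

/-- `closedSuperstr q = ⟨q₁, …, q_r, q₁⟩`, the string `y_C` of the cycle `q`. -/
noncomputable def closedSuperstr (q : List Str) : Str := superstr (q ++ [q.headI])

theorem prefix_closedSuperstr (q : List Str) : q.headI <+: closedSuperstr q := by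
  cases q with
  | nil => exact List.nil_prefix
  | cons a l => exact prefix_superstr_cons a _

theorem suffix_closedSuperstr (q : List Str) : q.headI <:+ closedSuperstr q := by
  cases q with
  | nil => exact List.nil_suffix
  | cons a l => exact suffix_superstr_concat a a l

theorem length_closedSuperstr (q : List Str) :
    (closedSuperstr q).length = cycleWeight q + q.headI.length := by
  cases q with
  | nil => rfl
  | cons a l =>
    rw [closedSuperstr, List.headI_cons, List.cons_append, length_superstr_concat,
      cycleWeight_eq_sum_zipWith, List.rotate_cons_succ, List.rotate_zero]

theorem exists_approxSol_length_eq_OPT (S : Finset Str) :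
    ∃ u, ApproxSol S u ∧ u.length = OPT S :=
  Nat.sInf_mem (s := {n | ∃ u, ApproxSol S u ∧ u.length = n}) ⟨_, S.toList.flatten,
    fun _ hs => Or.inl (List.infix_of_mem_flatten (Finset.mem_toList.mpr hs)), rfl⟩

theorem OPT_le {A : Finset Str} {v : Str} (h : ApproxSol A v) : OPT A ≤ v.length :=
  Nat.sInf_le ⟨v, h, rfl⟩

variable {S : Finset Str}

theorem ApproxSol.infix_or_rc_infix {u t : Str} (hu : ApproxSol S u) (ht : t ∈ S ∨ rc t ∈ S) :
    t <:+: u ∨ rc t <:+: u := by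
  rcases ht with ht | ht
  · exact hu t ht
  · simpa [or_comm] using hu (rc t) ht

namespace IsCycleCover

variable {C : Finset (List Str)} {p q : List Str} {a b : Str}

theorem not_mem_rc (hC : IsCycleCover S C) (hp : p ∈ C) (hq : q ∈ C) (ha : a ∈ p)
    (hb : rc a ∈ q) : False := by
  rcases hC.2.2.2.1 p hp a ha with hs | hs
  · rcases hC.2.2.2.2 a hs with ⟨-, h⟩ | ⟨-, h⟩
    · exact h ⟨q, hq, hb⟩
    · exact h ⟨p, hp, ha⟩
  · rcases hC.2.2.2.2 (rc a) hs with ⟨-, h⟩ | ⟨-, h⟩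
    · exact h ⟨p, hp, by rwa [rc_rc]⟩
    · exact h ⟨q, hq, hb⟩

theorem eq_of_mem_of_mem_up_to_rc (hC : IsCycleCover S C) (hp : p ∈ C) (hq : q ∈ C)
    (ha : a ∈ p) (hb : b ∈ q) {A : Str} (hA : A = a ∨ A = rc a) (hB : A = b ∨ A = rc b) :
    p = q := by
  rcases hA with rfl | rfl <;> rcases hB with hB | hB
  · by_contra hpq
    exact hC.2.2.1 p hp q hq hpq A ha (hB ▸ hb)
  · exact (hC.not_mem_rc hq hp hb (hB ▸ ha)).elim
  · exact (hC.not_mem_rc hp hq ha (hB ▸ hb)).elim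
  · by_contra hpq
    exact hC.2.2.1 p hp q hq hpq a ha (rc_injective hB ▸ hb)

end IsCycleCover

theorem exists_anchor {u : Str} (hu : ApproxSol S u) {p : List Str} (hp : p ≠ [])
    (hpS : ∀ t ∈ p, t ∈ S ∨ rc t ∈ S) (k : ℕ) :
    ∃ t ∈ p, ∃ T Y : Str, (T = t ∨ T = rc t) ∧
      (Y = closedSuperstr (p.rotate k) ∨ Y = rc (closedSuperstr (p.rotate k))) ∧
      T <+: Y ∧ T <:+ Y ∧ T <:+: u ∧ Y.length = cycleWeight p + T.length := by
  set q := p.rotate k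
  have ht : q.headI ∈ p := by
    obtain ⟨a, l, hq⟩ := List.exists_cons_of_ne_nil (List.rotate_eq_nil_iff.not.mpr hp : q ≠ [])
    rw [← List.mem_rotate (n := k)]
    simp [q, hq]
  have hlen : (closedSuperstr q).length = cycleWeight p + q.headI.length := by
    rw [length_closedSuperstr, cycleWeight_rotate]
  refine ⟨q.headI, ht, ?_⟩
  rcases (hu.infix_or_rc_infix (hpS _ ht)) with hinf | hinf
  · exact ⟨_, _, .inl rfl, .inl rfl, prefix_closedSuperstr q, suffix_closedSuperstr q, hinf, hlen⟩
  · exact ⟨_, _, .inr rfl, .inr rfl, (suffix_closedSuperstr q).rc, (prefix_closedSuperstr q).rc,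
      hinf, by simpa using hlen⟩

theorem opt_A_upperbound_general
    (S : Finset Str) (hS : SubstrFree S)
    (C : Finset (List Str)) (hC : IsCycleCover S C)
    (j : List Str → ℕ)
    (x : List Str → Str)
    (hx : ∀ p ∈ C,
      x p <:+: superstr (p.rotate (j p - 1) ++ [(p.rotate (j p - 1)).headI])) :
    OPT (C.image x) ≤ OPT S + coverWeight C := by
  obtain ⟨u, hu, hulen⟩ := exists_approxSol_length_eq_OPT S
  choose t ht T Y hTt hY hpre hsuf hinf hlen using fun p : C =>
    exists_anchor hu (hC.1 p p.2) (hC.2.2.2.1 p p.2) (j p - 1)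
  have hTS : ∀ p, T p ∈ S ∨ rc (T p) ∈ S := fun p => by
    rcases hTt p with h | h <;> rw [h]
    · exact hC.2.2.2.1 p p.2 _ (ht p)
    · simpa [or_comm] using hC.2.2.2.1 p p.2 _ (ht p)
  have hT : Pairwise fun p q : C => ¬ T p <:+: T q := by
    intro p q hpq
    refine hS _ (hTS p) _ (hTS q) fun hTpq => hpq (Subtype.ext ?_)
    exact hC.eq_of_mem_of_mem_up_to_rc p.2 q.2 (ht p) (ht q) (hTt p) (hTpq ▸ hTt q)
  obtain ⟨v, hv, hvlen⟩ := exists_superstring_of_borders hpre hsuf hinf hT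
  have hA : ApproxSol (C.image x) v := by
    simp only [ApproxSol, Finset.mem_image, forall_exists_index, and_imp]
    rintro _ p hp rfl
    have hYv := hv ⟨p, hp⟩
    rcases hY ⟨p, hp⟩ with h | h <;> rw [h] at hYv
    · exact .inl ((hx p hp).trans hYv)
    · exact .inr ((hx p hp).rc.trans hYv)
  have hsum : ∑ p, (Y p).length = coverWeight C + ∑ p, (T p).length := by
    rw [Finset.sum_congr rfl fun p _ => hlen p, Finset.sum_add_distrib, coverWeight,
      Finset.sum_coe_sort C cycleWeight]
  calc OPT (C.image x) ≤ v.length := OPT_le hA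
    _ ≤ OPT S + coverWeight C := by omega

/-- if for each cycle `p` of an optimal cycle cover, `x p` is a
substring of the closed superstring `y_p = ⟨x_j, …, x_r, x_1, …, x_j⟩`, then
`OPT(A) ≤ OPT(S) + w(CYC(G_S))` for `A = {x p}`. -/
theorem opt_A_upperbound
    (S : Finset Str) (hS : SubstrFree S)
    (C : Finset (List Str)) (hC : IsCycleCover S C)
    (hopt : ∀ C', IsCycleCover S C' → coverWeight C ≤ coverWeight C')
    (j : List Str → ℕ) (hj : ∀ p ∈ C, 1 ≤ j p ∧ j p ≤ p.length)
    (x : List Str → Str)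
    (hx : ∀ p ∈ C,
      x p <:+: superstr (p.rotate (j p - 1) ++ [(p.rotate (j p - 1)).headI])) :
    OPT (C.image x) ≤ OPT S + coverWeight C :=
  opt_A_upperbound_general S hS C hC j x hx
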